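/- For p ≥ 2 and r ≥ 1, the radius of OΓ_n^{(p,r)} equals ⌈nr/(pr+1)⌉, and 0^n is a central vertex. -/

import Mathlib

/-- Hamming distance between two binary words (as lists). -/
def hdist (u v : List Bool) : ℕ := (List.zipWith bne u v).count true

/-- `w` is an I-Fibonacci (p,r)-code: no factor `1^(r+1)` and no factor `1 0^s 1` with `s < p`
(equivalently: maximal blocks of 1s have length ≤ r and blocks of 1s are separated by ≥ p zeros). -/
def ICode (p r : ℕ) (w : List Bool) : Prop :=
  ¬ (List.replicate (r + 1) true <:+: w) ∧
  ∀ s < p, ¬ ((true :: (List.replicate s false ++ [true])) <:+: w)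

/-- `w` is an O-Fibonacci (p,r)-code: no factor `(10^(p-1))^r 1` and no factor `1 0^s 1`
with `s ≤ p - 2`. -/
def OCode (p r : ℕ) (w : List Bool) : Prop :=
  ¬ (((List.replicate r (true :: List.replicate (p - 1) false)).flatten ++ [true]) <:+: w) ∧
  ∀ s, s + 2 ≤ p → ¬ ((true :: (List.replicate s false ++ [true])) <:+: w)

/-- Vertex type of the I-Fibonacci (p,r)-cube of dimension n. -/
def IVert (p r n : ℕ) := {w : List Bool // w.length = n ∧ ICode p r w}

/-- Vertex type of the O-Fibonacci (p,r)-cube of dimension n. -/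
def OVert (p r n : ℕ) := {w : List Bool // w.length = n ∧ OCode p r w}

/-- The I-Fibonacci (p,r)-cube: vertices adjacent iff they differ in exactly one coordinate. -/
def IGraph (p r n : ℕ) : SimpleGraph (IVert p r n) :=
  SimpleGraph.fromRel (fun u v => hdist u.1 v.1 = 1)

/-- The O-Fibonacci (p,r)-cube. -/
def OGraph (p r n : ℕ) : SimpleGraph (OVert p r n) :=
  SimpleGraph.fromRel (fun u v => hdist u.1 v.1 = 1)

/-- Eccentricity of a vertex. -/
noncomputable def ecc {V : Type*} (G : SimpleGraph V) (v : V) : ℕ :=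
  sSup {d | ∃ u, G.dist v u = d}

/-- Radius of a graph. -/
noncomputable def grad {V : Type*} (G : SimpleGraph V) : ℕ :=
  sInf {e | ∃ v, ecc G v = e}

/-- Diameter of a graph. -/
noncomputable def gdiam {V : Type*} (G : SimpleGraph V) : ℕ :=
  sSup {d | ∃ u v, G.dist u v = d}

/-- Degree of a vertex (number of neighbours). -/
noncomputable def deg {V : Type*} (G : SimpleGraph V) (v : V) : ℕ :=
  {u | G.Adj v u}.ncard

/-!
Write `N = p * r + 1`. In an O-code word consecutive ones are at distance at least `p`, and among
any `r` consecutive gaps one exceeds `p`; so a word of length `n` has weight at most `⌈n r / N⌉`.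
Distances from `0ⁿ` are weights, hence `ecc 0ⁿ ≤ ⌈n r / N⌉`. Conversely, the `N` cyclic shifts of
the word with ones at the positions `≡ 0, p, …, (r - 1) p (mod N)` are O-codes, and every
coordinate of a vertex `v` disagrees with exactly `r` or `N - r ≥ r` of them; averaging, some shift
is at Hamming distance, hence graph distance, at least `⌈n r / N⌉` from `v`.
-/

open Finset

lemma hdist_cons_cons (a b : Bool) (u v : List Bool) :
    hdist (a :: u) (b :: v) = hdist u v + if a = b then 0 else 1 := by
  cases a <;> cases b <;> simp [hdist]

lemma hdist_self (u : List Bool) : hdist u u = 0 := by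
  induction u with
  | nil => rfl
  | cons a u ih => simp [hdist_cons_cons, ih]

lemma hdist_comm (u v : List Bool) : hdist u v = hdist v u := by
  induction u generalizing v with
  | nil => cases v <;> rfl
  | cons a u ih =>
    cases v with
    | nil => rfl
    | cons b v => simp only [hdist_cons_cons, ih v, eq_comm]

lemma hdist_triangle {u v w : List Bool} (huv : u.length = v.length)
    (hvw : v.length = w.length) : hdist u w ≤ hdist u v + hdist v w := by
  induction u generalizing v w with
  | nil => simp [hdist]
  | cons a u ih =>
    obtain _ | ⟨b, v⟩ := v
    · simp at huv
    obtain _ | ⟨c, w⟩ := w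
    · simp at hvw
    simp only [List.length_cons, Nat.add_right_cancel_iff] at huv hvw
    have := ih huv hvw
    simp only [hdist_cons_cons]
    cases a <;> cases b <;> cases c <;> simp <;> omega

lemma hdist_append_left (l u v : List Bool) : hdist (l ++ u) (l ++ v) = hdist u v := by
  induction l with
  | nil => rfl
  | cons a l ih => simp [hdist_cons_cons, ih]

lemma hdist_replicate_false_left {u : List Bool} {n : ℕ} (h : u.length = n) :
    hdist (List.replicate n false) u = u.count true := by
  subst h
  induction u with
  | nil => rfl
  | cons a u ih => cases a <;> simp [List.replicate_succ, hdist_cons_cons, ih]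

lemma hdist_eq_sum {u v : List Bool} (h : u.length = v.length) :
    hdist u v = ∑ i ∈ range u.length, if u.getD i false = v.getD i false then 0 else 1 := by
  induction u generalizing v with
  | nil => rfl
  | cons a u ih =>
    obtain _ | ⟨b, v⟩ := v
    · simp at h
    rw [hdist_cons_cons, ih (by simpa using h), List.length_cons, sum_range_succ']
    rfl

def runPattern (p : ℕ) : ℕ → List Bool
  | 0 => [true]
  | j + 1 => true :: List.replicate (p - 1) false ++ runPattern p j

lemma flatten_replicate_append_eq_runPattern (p j : ℕ) :
    (List.replicate j (true :: List.replicate (p - 1) false)).flatten ++ [true] =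
      runPattern p j := by
  induction j with
  | zero => rfl
  | succ j ih => simp [List.replicate_succ, runPattern, ← ih]

lemma runPattern_eq_cons (p j : ℕ) : ∃ l, runPattern p j = true :: l := by
  cases j <;> exact ⟨_, rfl⟩

lemma runPattern_getD_mul {p : ℕ} (hp : 0 < p) (j : ℕ) :
    (runPattern p j).getD (j * p) false = true := by
  induction j with
  | zero => simp [runPattern]
  | succ j ih =>
    rw [runPattern, List.getD_append_right _ _ _ _ (by simp [Nat.succ_mul]; omega)]
    convert ih using 2
    simp [Nat.succ_mul]
    omega

lemma List.exists_eq_replicate_false_append {w : List Bool} (h : true ∈ w) :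
    ∃ a t, w = List.replicate a false ++ true :: t := by
  obtain ⟨s, t, rfl, hs⟩ := List.eq_append_cons_of_mem h
  refine ⟨s.length, t, congrArg (· ++ true :: t) ?_⟩
  exact List.eq_replicate_iff.mpr ⟨rfl, fun b hb => by cases b <;> simp_all⟩

lemma cons_true_infix_of_infix_replicate_false_append {l t : List Bool} {m : ℕ}
    (h : true :: l <:+: List.replicate m false ++ t) : true :: l <:+: t := by
  induction m with
  | zero => simpa using h
  | succ m ih =>
    rw [List.replicate_succ, List.cons_append, List.infix_cons_iff] at h
    exact h.elim (fun h => absurd (List.cons_prefix_cons.mp h).1 Bool.noConfusion) ih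

lemma List.getD_eq_true_of_infix {l w : List Bool} (h : l <:+: w) :
    ∃ k, ∀ i, l.getD i false = true → w.getD (k + i) false = true := by
  obtain ⟨s, e, rfl⟩ := h
  refine ⟨s.length, fun i hi => ?_⟩
  have hil : i < l.length := by
    by_contra hil
    rw [List.getD_eq_default _ _ (not_lt.mp hil)] at hi
    exact Bool.false_ne_true hi
  rwa [List.getD_append _ _ _ _ (by simpa using hil), List.getD_append_right _ _ _ _ (by omega),
    Nat.add_sub_cancel_left]

namespace OCode

variable {p r : ℕ}

lemma not_runPattern_infix {w : List Bool} (h : OCode p r w) : ¬ runPattern p r <:+: w := by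
  rw [← flatten_replicate_append_eq_runPattern]
  exact h.1

lemma of_infix {w l : List Bool} (h : OCode p r w) (hl : l <:+: w) : OCode p r l :=
  ⟨fun hc => h.1 (hc.trans hl), fun s hs hc => h.2 s hs (hc.trans hl)⟩

lemma replicate_false_append {t : List Bool} (h : OCode p r t) (m : ℕ) :
    OCode p r (List.replicate m false ++ t) := by
  refine ⟨fun hc => ?_, fun s hs hc => h.2 s hs
    (cons_true_infix_of_infix_replicate_false_append hc)⟩
  obtain ⟨l, hl⟩ := runPattern_eq_cons p r
  rw [flatten_replicate_append_eq_runPattern, hl] at hc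
  exact h.not_runPattern_infix (hl ▸ cons_true_infix_of_infix_replicate_false_append hc)

lemma of_getD (hp : 0 < p) {w : List Bool}
    (hgap : ∀ x d, w.getD x false = true → w.getD (x + d) false = true → 0 < d → p ≤ d)
    (hrun : ∀ x, w.getD x false = true → w.getD (x + r * p) false = true → False) :
    OCode p r w := by
  refine ⟨fun hc => ?_, fun s hs hc => ?_⟩
  · rw [flatten_replicate_append_eq_runPattern] at hc
    obtain ⟨k, hk⟩ := List.getD_eq_true_of_infix hc
    obtain ⟨l, hl⟩ := runPattern_eq_cons p r
    exact hrun k (hk 0 (by simp [hl])) (hk _ (runPattern_getD_mul hp r))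
  · obtain ⟨k, hk⟩ := List.getD_eq_true_of_infix hc
    have := hgap k (s + 1) (hk 0 rfl) (hk (s + 1) (by simp)) s.succ_pos
    omega

lemma exists_gap {t : List Bool} (h : OCode p r (true :: t)) (ht : true ∈ t) :
    ∃ s t', t = List.replicate s false ++ true :: t' ∧ p ≤ s + 1 := by
  obtain ⟨s, t', rfl⟩ := List.exists_eq_replicate_false_append ht
  refine ⟨s, t', rfl, ?_⟩
  by_contra hs
  exact h.2 s (by omega) (List.IsPrefix.isInfix ⟨t', by simp⟩)

/-- Loaded for the induction: the leading run of gaps of length exactly `p` has fewer than `j`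
gaps, later runs fewer than `r`, and every run is closed by a gap of length more than `p`. -/
theorem count_mul_add_le_of_cons (t : List Bool) (j : ℕ)
    (h : OCode p r (true :: t)) (hpre : ¬ runPattern p j <+: true :: t) :
    (true :: t).count true * (p * r + 1) + r ≤ r * (true :: t).length + p * r + j := by
  induction hn : t.length using Nat.strong_induction_on generalizing t j with
  | _ n ih =>
  have hj : 0 < j := Nat.pos_of_ne_zero <| by
    rintro rfl
    exact hpre ⟨t, rfl⟩
  by_cases ht : true ∈ t
  swap
  · simp only [List.count_cons_self, List.count_eq_zero.mpr ht, List.length_cons]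
    nlinarith
  obtain ⟨s, t', rfl, hs⟩ := h.exists_gap ht
  have h' : OCode p r (true :: t') :=
    h.of_infix ((List.suffix_append _ _).trans (List.suffix_cons _ _)).isInfix
  have hlt : t'.length < n := by simp [← hn]; omega
  have hcount : (true :: (List.replicate s false ++ true :: t')).count true =
      (true :: t').count true + 1 := by simp [List.count_replicate]
  have hlen : (true :: (List.replicate s false ++ true :: t')).length =
      (true :: t').length + (s + 1) := by simp; omega
  rw [hcount, hlen]
  rcases hs.eq_or_lt with hps | hps
  · obtain ⟨j, rfl⟩ := Nat.exists_eq_add_one_of_ne_zero hj.ne'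
    have hpre' : ¬ runPattern p j <+: true :: t' := fun hj' =>
      hpre (by simpa [runPattern, hps] using hj')
    have := ih _ hlt t' j h' hpre' rfl
    nlinarith
  · have := ih _ hlt t' r h' (fun hr => h'.not_runPattern_infix hr.isInfix) rfl
    have hrs : r * (p + 1) ≤ r * (s + 1) := Nat.mul_le_mul_left r hps
    nlinarith

theorem count_mul_le {w : List Bool} (h : OCode p r w) :
    w.count true * (p * r + 1) ≤ r * w.length + p * r := by
  by_cases hw : true ∈ w
  swap
  · simp [List.count_eq_zero.mpr hw]
  obtain ⟨a, t, rfl⟩ := List.exists_eq_replicate_false_append hw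
  have hsuf : true :: t <:+ List.replicate a false ++ true :: t := List.suffix_append _ _
  have := count_mul_add_le_of_cons t r (h.of_infix hsuf.isInfix)
    (fun hpre => h.not_runPattern_infix (hpre.isInfix.trans hsuf.isInfix))
  simp only [List.count_cons_self, List.length_cons, add_le_add_iff_right, List.count_append,
    List.count_replicate, beq_true, Bool.false_eq_true, ↓reduceIte, zero_add, List.length_append,
    List.length_replicate] at this ⊢
  nlinarith

end OCode

section PeriodicWord

variable {p r : ℕ}

def periodicBit (p r x : ℕ) : Bool := decide (x % (p * r + 1) < p * r ∧ p ∣ x % (p * r + 1))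

def periodicWord (p r j n : ℕ) : List Bool := (List.range n).map fun i => periodicBit p r (i + j)

lemma periodicWord_length (j n : ℕ) : (periodicWord p r j n).length = n := by
  simp [periodicWord]

lemma periodicWord_getD {j n i : ℕ} (hi : i < n) :
    (periodicWord p r j n).getD i false = periodicBit p r (i + j) := by
  simp [periodicWord, List.getD_eq_getElem?_getD, hi]

lemma periodicWord_getD_eq_true {j n i : ℕ} (h : (periodicWord p r j n).getD i false = true) :
    periodicBit p r (i + j) = true := by
  by_cases hi : i < n
  · rwa [← periodicWord_getD hi]
  · rw [List.getD_eq_default _ _ (by rw [periodicWord_length]; omega)] at h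
    exact absurd h Bool.false_ne_true

lemma periodicBit_add_eq_false {x d : ℕ} (hx : periodicBit p r x = true) (hd : 0 < d)
    (hdp : d < p) : periodicBit p r (x + d) = false := by
  simp only [periodicBit, decide_eq_true_eq, decide_eq_false_iff_not, not_and] at hx ⊢
  obtain ⟨hlt, hdvd⟩ := hx
  have hle : x % (p * r + 1) + p ≤ p * r :=
    Nat.le_of_lt_add_of_dvd (by omega) (Nat.dvd_add_self_right.mpr hdvd) (dvd_mul_right p r)
  have hmod : (x + d) % (p * r + 1) = x % (p * r + 1) + d := by
    rw [Nat.add_mod, Nat.mod_eq_of_lt (a := d) (by omega), Nat.mod_eq_of_lt (by omega)]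
  rw [hmod]
  intro _ hdvd'
  exact absurd (Nat.le_of_dvd hd ((Nat.dvd_add_right hdvd).mp hdvd')) (by omega)

lemma periodicBit_add_mul_eq_false (hp : 2 ≤ p) {x : ℕ} (hx : periodicBit p r x = true) :
    periodicBit p r (x + r * p) = false := by
  simp only [periodicBit, decide_eq_true_eq, decide_eq_false_iff_not, not_and] at hx ⊢
  intro hlt hdvd
  have hmod : (x + r * p) % (p * r + 1) + 1 = x % (p * r + 1) := by
    refine Nat.ModEq.eq_of_lt_of_lt ?_ (by omega) (Nat.mod_lt _ (by omega))
    calc (x + r * p) % (p * r + 1) + 1 ≡ x + r * p + 1 [MOD p * r + 1] :=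
          (Nat.mod_modEq _ _).add_right 1
      _ = x + (p * r + 1) := by ring
      _ ≡ x [MOD p * r + 1] := Nat.add_modEq_right
      _ ≡ x % (p * r + 1) [MOD p * r + 1] := (Nat.mod_modEq _ _).symm
  have := Nat.le_of_dvd one_pos ((Nat.dvd_add_right hdvd).mp (hmod ▸ hx.2))
  omega

lemma periodicWord_OCode (hp : 2 ≤ p) (j n : ℕ) : OCode p r (periodicWord p r j n) := by
  refine OCode.of_getD (by omega) (fun x d hx hy hd => ?_) (fun x hx hy => ?_)
  · by_contra hdp
    have hy' := periodicWord_getD_eq_true hy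
    rw [add_right_comm, periodicBit_add_eq_false (periodicWord_getD_eq_true hx) hd
      (not_le.mp hdp)] at hy'
    exact Bool.false_ne_true hy'
  · have hy' := periodicWord_getD_eq_true hy
    rw [add_right_comm, periodicBit_add_mul_eq_false hp (periodicWord_getD_eq_true hx)] at hy'
    exact Bool.false_ne_true hy'

lemma periodic_periodicBit :
    Function.Periodic (fun x => periodicBit p r x = true) (p * r + 1) := by
  intro x
  simp [periodicBit]

lemma filter_range_periodicBit (hp : 0 < p) :
    {x ∈ range (p * r + 1) | periodicBit p r x = true} =
      (range r).map ⟨(p * ·), mul_right_injective₀ hp.ne'⟩ := by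
  ext x
  simp only [mem_filter, mem_range, periodicBit, decide_eq_true_eq, mem_map,
    Function.Embedding.coeFn_mk]
  constructor
  · rintro ⟨hx, hlt, a, ha⟩
    rw [Nat.mod_eq_of_lt hx] at hlt ha
    exact ⟨a, (Nat.mul_lt_mul_left hp).mp (ha ▸ hlt), ha.symm⟩
  · rintro ⟨a, ha, rfl⟩
    have := (Nat.mul_lt_mul_left hp).mpr ha
    rw [Nat.mod_eq_of_lt (by omega)]
    exact ⟨by omega, this, dvd_mul_right p a⟩

lemma card_filter_periodicBit (hp : 0 < p) (i : ℕ) :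
    #{j ∈ range (p * r + 1) | periodicBit p r (i + j) = true} = r := by
  have hshift := map_add_left_Ico 0 (p * r + 1) i
  rw [add_zero] at hshift
  calc #{j ∈ range (p * r + 1) | periodicBit p r (i + j) = true}
      = #{x ∈ Ico i (i + (p * r + 1)) | periodicBit p r x = true} := by
        rw [← hshift, filter_map, card_map, ← range_eq_Ico]
        rfl
    _ = r := by
        rw [Nat.filter_Ico_card_eq_of_periodic _ _ _ periodic_periodicBit,
          Nat.count_eq_card_filter_range, filter_range_periodicBit hp, card_map, card_range]

lemma le_card_filter_periodicBit_ne (hp : 2 ≤ p) (i : ℕ) (b : Bool) :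
    r ≤ #{j ∈ range (p * r + 1) | periodicBit p r (i + j) ≠ b} := by
  have hcard := card_filter_periodicBit (p := p) (r := r) (by omega) i
  cases b
  · simp only [ne_eq, Bool.not_eq_false, hcard, le_refl]
  · have := card_filter_add_card_filter_not (s := range (p * r + 1))
      (fun j => periodicBit p r (i + j) = true)
    rw [hcard, card_range] at this
    nlinarith

theorem mul_le_sum_hdist_periodicWord (hp : 2 ≤ p) (v : List Bool) :
    v.length * r ≤ ∑ j ∈ range (p * r + 1), hdist v (periodicWord p r j v.length) := by
  calc v.length * r = ∑ _i ∈ range v.length, r := by simp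
    _ ≤ ∑ i ∈ range v.length,
          #{j ∈ range (p * r + 1) | periodicBit p r (i + j) ≠ v.getD i false} :=
        sum_le_sum fun i _ => le_card_filter_periodicBit_ne hp i _
    _ = ∑ i ∈ range v.length, ∑ j ∈ range (p * r + 1),
          if v.getD i false = (periodicWord p r j v.length).getD i false then 0 else 1 := by
        refine sum_congr rfl fun i hi => ?_
        rw [card_filter]
        refine sum_congr rfl fun j _ => ?_
        rw [periodicWord_getD (mem_range.mp hi), eq_comm]
        split_ifs <;> simp_all
    _ = ∑ j ∈ range (p * r + 1), hdist v (periodicWord p r j v.length) := by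
        rw [sum_comm]
        exact sum_congr rfl fun j _ => (hdist_eq_sum (periodicWord_length _ _).symm).symm

theorem exists_le_hdist_periodicWord (hp : 2 ≤ p) (v : List Bool) :
    ∃ j, (v.length * r + p * r) / (p * r + 1) ≤ hdist v (periodicWord p r j v.length) := by
  obtain ⟨j, -, hj⟩ := exists_le_of_sum_le (s := range (p * r + 1))
    (f := fun _ => v.length * r) (g := fun j => (p * r + 1) * hdist v (periodicWord p r j v.length))
    ⟨0, by simp⟩
    (by rw [sum_const, card_range, smul_eq_mul, ← mul_sum]
        exact Nat.mul_le_mul_left _ (mul_le_sum_hdist_periodicWord hp v))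
  refine ⟨j, (Nat.div_le_iff_le_mul_add_pred (by omega)).mpr ?_⟩
  omega

end PeriodicWord

section Eccentricity

variable {V : Type*} {G : SimpleGraph V}

lemma ecc_le {v : V} {B : ℕ} (h : ∀ u, G.dist v u ≤ B) : ecc G v ≤ B :=
  csSup_le ⟨_, v, rfl⟩ (by rintro _ ⟨u, rfl⟩; exact h u)

lemma dist_le_ecc [Finite V] (v u : V) : G.dist v u ≤ ecc G v :=
  le_csSup (Set.finite_range (G.dist v)).bddAbove ⟨u, rfl⟩

lemma grad_eq_of_ecc_eq {v : V} {R : ℕ} (hv : ecc G v = R) (h : ∀ w, R ≤ ecc G w) :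
    grad G = R :=
  le_antisymm (Nat.sInf_le ⟨v, hv⟩) <|
    le_csInf ⟨_, v, hv⟩ (by rintro _ ⟨w, rfl⟩; exact h w)

end Eccentricity

namespace OGraph

variable {p r n : ℕ}

instance : Finite (OVert p r n) :=
  ((List.finite_length_eq Bool n).subset fun _ h => h.1).to_subtype

def zero (p r n : ℕ) : OVert p r n :=
  ⟨List.replicate n false, List.length_replicate, by
    simpa using (show OCode p r [] from ⟨by simp, by simp⟩).replicate_false_append n⟩

lemma hdist_eq_one_of_adj {u v : OVert p r n} (h : (OGraph p r n).Adj u v) :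
    hdist u.1 v.1 = 1 := by
  rw [OGraph, SimpleGraph.fromRel_adj] at h
  exact h.2.elim id fun h => hdist_comm u.1 v.1 ▸ h

lemma hdist_le_length {u v : OVert p r n} (w : (OGraph p r n).Walk u v) :
    hdist u.1 v.1 ≤ w.length := by
  induction w with
  | nil => simp [hdist_self]
  | @cons a b c hadj w ih =>
    calc hdist a.1 c.1 ≤ hdist a.1 b.1 + hdist b.1 c.1 :=
          hdist_triangle (a.2.1.trans b.2.1.symm) (b.2.1.trans c.2.1.symm)
      _ ≤ w.length + 1 := by rw [hdist_eq_one_of_adj hadj]; omega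

lemma exists_adj_count_succ {u : OVert p r n} (hu : true ∈ u.1) :
    ∃ u', (OGraph p r n).Adj u' u ∧ u'.1.count true + 1 = u.1.count true := by
  obtain ⟨a, t, hat⟩ := List.exists_eq_replicate_false_append hu
  have hw : OCode p r (List.replicate a false ++ true :: t) := hat ▸ u.2.2
  have hlen : (List.replicate a false ++ true :: t).length = n := hat ▸ u.2.1
  have ht : t <:+: List.replicate a false ++ true :: t :=
    ((List.suffix_cons _ _).trans (List.suffix_append _ _)).isInfix
  let u' : OVert p r n := ⟨List.replicate (a + 1) false ++ t, by simp at hlen ⊢; omega,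
    (hw.of_infix ht).replicate_false_append _⟩
  have hdist : hdist u'.1 u.1 = 1 := by
    change hdist (List.replicate (a + 1) false ++ t) u.1 = 1
    rw [hat, List.replicate_succ', List.append_assoc]
    simp [hdist_append_left, hdist_cons_cons, hdist_self]
  refine ⟨u', ?_, by simp [u', hat, List.count_replicate]⟩
  rw [OGraph, SimpleGraph.fromRel_adj]
  exact ⟨fun h => by simp [h, hdist_self] at hdist, Or.inl hdist⟩

lemma exists_walk_zero (k : ℕ) (u : OVert p r n) (hk : u.1.count true = k) :
    ∃ w : (OGraph p r n).Walk (zero p r n) u, w.length = k := by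
  induction k generalizing u with
  | zero =>
    obtain rfl : u = zero p r n := Subtype.ext <| List.eq_replicate_iff.mpr
      ⟨u.2.1, fun b hb => by cases b; rfl; exact absurd hb (List.count_eq_zero.mp hk)⟩
    exact ⟨.nil, rfl⟩
  | succ k ih =>
    obtain ⟨u', hadj, hcount⟩ :=
      exists_adj_count_succ (u := u) (List.count_pos_iff.mp (by omega))
    obtain ⟨w, hw⟩ := ih u' (by omega)
    exact ⟨w.concat hadj, by rw [SimpleGraph.Walk.length_concat, hw]⟩

lemma reachable_zero (u : OVert p r n) : (OGraph p r n).Reachable (zero p r n) u :=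
  let ⟨w, _⟩ := exists_walk_zero _ u rfl; ⟨w⟩

lemma dist_zero (u : OVert p r n) : (OGraph p r n).dist (zero p r n) u = u.1.count true := by
  refine le_antisymm ?_ ?_
  · obtain ⟨w, hw⟩ := exists_walk_zero _ u rfl
    exact hw ▸ SimpleGraph.dist_le w
  · obtain ⟨w, hw⟩ := (reachable_zero u).exists_walk_length_eq_dist
    exact (hdist_replicate_false_left u.2.1).symm.trans_le (hw ▸ hdist_le_length w)

lemma count_true_le (u : OVert p r n) : u.1.count true ≤ (n * r + p * r) / (p * r + 1) := by
  have := u.2.2.count_mul_le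
  rw [u.2.1, mul_comm r] at this
  exact (Nat.le_div_iff_mul_le (by omega)).mpr this

lemma le_ecc (hp : 2 ≤ p) (v : OVert p r n) :
    (n * r + p * r) / (p * r + 1) ≤ ecc (OGraph p r n) v := by
  obtain ⟨j, hj⟩ := exists_le_hdist_periodicWord (r := r) hp v.1
  let u : OVert p r n :=
    ⟨periodicWord p r j n, periodicWord_length j n, periodicWord_OCode hp j n⟩
  obtain ⟨w, hw⟩ :=
    ((reachable_zero v).symm.trans (reachable_zero u)).exists_walk_length_eq_dist
  calc (n * r + p * r) / (p * r + 1) ≤ hdist v.1 u.1 := by simpa [v.2.1] using hj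
    _ ≤ (OGraph p r n).dist v u := hw ▸ hdist_le_length w
    _ ≤ ecc (OGraph p r n) v := dist_le_ecc v u

end OGraph

theorem OGraph_radius_general (p r n : ℕ) (hp : 2 ≤ p) :
    grad (OGraph p r n) = (n * r + p * r) / (p * r + 1) ∧
    ∀ v : OVert p r n, v.1 = List.replicate n false →
      ecc (OGraph p r n) v = grad (OGraph p r n) := by
  have hzero : ecc (OGraph p r n) (OGraph.zero p r n) = (n * r + p * r) / (p * r + 1) :=
    le_antisymm (ecc_le fun u => (OGraph.dist_zero u).trans_le (OGraph.count_true_le u))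
      (OGraph.le_ecc hp _)
  have hgrad := grad_eq_of_ecc_eq hzero (OGraph.le_ecc hp)
  refine ⟨hgrad, fun v hv => ?_⟩
  obtain rfl : v = OGraph.zero p r n := Subtype.ext hv
  rw [hzero, hgrad]

/-- for `p ≥ 2`, `r ≥ 1`, `rad(OΓ_n^{(p,r)}) = ⌈nr/(pr+1)⌉` and
`0^n` is a central vertex. -/
theorem OGraph_radius (p r n : ℕ) (hp : 2 ≤ p) (hr : 1 ≤ r) (hn : 1 ≤ n) :
    grad (OGraph p r n) = (n * r + p * r) / (p * r + 1) ∧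
    ∀ v : OVert p r n, v.1 = List.replicate n false →
      ecc (OGraph p r n) v = grad (OGraph p r n) :=
  OGraph_radius_general p r n hp
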